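/- arXiv:1506.04885 — 3 statements merged into one kernel-verified Lean document; each statement's English description precedes it below -/
import Mathlib

section
/- Hourglass alternative, part (ii): Let 𝒜 be an IRU-set of N×M real matrices containing a matrix Ã with Ã·u = v. Then either A·u ≤ v componentwise for all A ∈ 𝒜, or there exists Ā ∈ 𝒜 with Ā·u ≥ v componentwise and Ā·u ≠ v. -/
open Matrix

/-- Spectral radius of a real square matrix: the maximum modulus of its complex eigenvalues. -/
noncomputable def specRad {N : ℕ} (A : Matrix (Fin N) (Fin N) ℝ) : ℝ :=
  sSup ((fun z : ℂ => ‖z‖) '' spectrum ℂ (A.map (Complex.ofReal)))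

/-- The IRU-set (independent row uncertainty set) determined by row sets `rows i ⊆ ℝ^M`:
all `N × M` matrices whose `i`-th row belongs to `rows i`. -/
def IRU {N M : ℕ} (rows : Fin N → Set (Fin M → ℝ)) : Set (Matrix (Fin N) (Fin M) ℝ) :=
  {A | ∀ i, A i ∈ rows i}

theorem updateRow_mem_IRU {N M : ℕ} {rows : Fin N → Set (Fin M → ℝ)}
    {A : Matrix (Fin N) (Fin M) ℝ} (hA : A ∈ IRU rows) {i : Fin N} {r : Fin M → ℝ}
    (hr : r ∈ rows i) : A.updateRow i r ∈ IRU rows := by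
  intro j
  obtain rfl | hji := eq_or_ne j i
  · simpa using hr
  · simpa [hji] using hA j

theorem stmt5 {N M : ℕ} (rows : Fin N → Set (Fin M → ℝ))
    (Atil : Matrix (Fin N) (Fin M) ℝ) (hAtil : Atil ∈ IRU rows)
    (u : Fin M → ℝ) (v : Fin N → ℝ) (hv : Atil.mulVec u = v) :
    (∀ A ∈ IRU rows, ∀ i, A.mulVec u i ≤ v i) ∨
      (∃ Abar ∈ IRU rows, (∀ i, v i ≤ Abar.mulVec u i) ∧ Abar.mulVec u ≠ v) := by
  by_cases h : ∀ A ∈ IRU rows, ∀ i, A.mulVec u i ≤ v i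
  · exact Or.inl h
  push Not at h
  obtain ⟨A, hA, i, hi⟩ := h
  have hlt : v < (Atil.updateRow i (A i)).mulVec u := by
    rw [updateRow_mulVec, hv, lt_update_self_iff]
    exact hi
  exact Or.inr ⟨_, updateRow_mem_IRU hAtil (hA i), hlt.le, hlt.ne'⟩
end

section
/- Minimax theorem for IRU-sets: if 𝒜 is a compact IRU-set of nonnegative N×M real matrices and ℬ is a compact IRU-set of nonnegative M×N real matrices, then min over A ∈ 𝒜 of max over B ∈ ℬ of ρ(A·B) equals max over B ∈ ℬ of min over A ∈ 𝒜 of ρ(A·B), where ρ denotes the spectral radius. -/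
/-!
Perturb the game by `ε J` (`J` the all-ones matrix) and consider the nonlinear operator
`x ↦ min_{A ∈ 𝒜} max_{B ∈ ℬ} (A B + ε J) x`; for IRU-sets it is computed row by row, and it is
continuous, positively homogeneous and strictly monotone. Maximising the Collatz–Wielandt number
over the simplex yields a positive eigenvector `x` with eigenvalue `r`. The rows optimal at `x` give
`As ∈ 𝒜`, `Bs ∈ ℬ` with `As B x ≤ r x` for every `B ∈ ℬ` and `r x ≤ (A Bs + ε J) x` for every
`A ∈ 𝒜`, so by the Collatz–Wielandt bounds `min_A max_B ρ(A B) ≤ r ≤ ρ(A Bs + ε J)`.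
As `ε → 0` along a subsequence with `Bs → B̂`, upper semicontinuity of `ρ` (from Gelfand's formula)
gives `min_A max_B ρ(A B) ≤ min_A ρ(A B̂) ≤ max_B min_A ρ(A B)`; the reverse inequality is weak
duality.
-/

open Matrix

open Filter Topology
open scoped Pointwise

section SpectralRadius

attribute [local instance] Matrix.linftyOpNormedAddCommGroup Matrix.linftyOpNormedRing
  Matrix.linftyOpNormedAlgebra

variable {n : ℕ}

lemma exists_mulVec_eq_smul_of_mem_spectrum {A : Matrix (Fin n) (Fin n) ℂ} {z : ℂ}
    (hz : z ∈ spectrum ℂ A) : ∃ v, v ≠ 0 ∧ A *ᵥ v = z • v := by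
  rw [← spectrum_toLin', ← Module.End.hasEigenvalue_iff_mem_spectrum] at hz
  obtain ⟨v, hv⟩ := hz.exists_hasEigenvector
  exact ⟨v, hv.2, Module.End.mem_eigenspace_iff.1 hv.1⟩

lemma isCompact_norm_image_spectrum (A : Matrix (Fin n) (Fin n) ℝ) :
    IsCompact ((fun z : ℂ => ‖z‖) '' spectrum ℂ (A.map Complex.ofReal)) :=
  (spectrum.isCompact _).image continuous_norm

lemma specRad_nonneg (A : Matrix (Fin n) (Fin n) ℝ) : 0 ≤ specRad A :=
  Real.sSup_nonneg (by rintro _ ⟨z, _, rfl⟩; exact norm_nonneg z)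

lemma norm_le_specRad {A : Matrix (Fin n) (Fin n) ℝ} {z : ℂ}
    (hz : z ∈ spectrum ℂ (A.map Complex.ofReal)) : ‖z‖ ≤ specRad A :=
  le_csSup (isCompact_norm_image_spectrum A).bddAbove ⟨z, hz, rfl⟩

lemma exists_norm_eq_specRad [Nonempty (Fin n)] (A : Matrix (Fin n) (Fin n) ℝ) :
    ∃ z ∈ spectrum ℂ (A.map Complex.ofReal), ‖z‖ = specRad A :=
  (isCompact_norm_image_spectrum A).sSup_mem ((spectrum.nonempty _).image _)

lemma norm_mul_norm_le_sum_mul_norm {A : Matrix (Fin n) (Fin n) ℝ} (hA : ∀ i j, 0 ≤ A i j)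
    {v : Fin n → ℂ} {z : ℂ} (hAv : A.map Complex.ofReal *ᵥ v = z • v) (i : Fin n) :
    ‖z‖ * ‖v i‖ ≤ ∑ j, A i j * ‖v j‖ := by
  rw [← norm_mul z (v i), ← smul_eq_mul, ← Pi.smul_apply z v, ← hAv]
  refine (norm_sum_le Finset.univ fun j => A.map Complex.ofReal i j * v j).trans_eq
    (Finset.sum_congr rfl fun j _ => ?_)
  rw [map_apply, norm_mul, Complex.norm_real, Real.norm_of_nonneg (hA i j)]

theorem specRad_le_of_mulVec_le {A : Matrix (Fin n) (Fin n) ℝ} (hA : ∀ i j, 0 ≤ A i j)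
    {x : Fin n → ℝ} (hx : ∀ i, 0 < x i) {r : ℝ} (hr : 0 ≤ r) (h : A *ᵥ x ≤ r • x) :
    specRad A ≤ r := by
  refine Real.sSup_le ?_ hr
  rintro _ ⟨z, hz, rfl⟩
  obtain ⟨v, hv, hAv⟩ := exists_mulVec_eq_smul_of_mem_spectrum hz
  obtain ⟨j₀, hj₀⟩ := Function.ne_iff.1 hv
  -- compare `|v|` with the smallest multiple `c • x` that dominates it
  obtain ⟨i₀, -, hi₀⟩ := Finset.exists_max_image Finset.univ (fun i => ‖v i‖ / x i)
    ⟨j₀, Finset.mem_univ j₀⟩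
  set c := ‖v i₀‖ / x i₀
  have hvc : ∀ j, ‖v j‖ ≤ c * x j := fun j => (div_le_iff₀ (hx j)).1 (hi₀ j (Finset.mem_univ j))
  have hc : 0 < c := (div_pos (norm_pos_iff.2 hj₀) (hx j₀)).trans_le (hi₀ j₀ (Finset.mem_univ j₀))
  have hvi₀ : ‖v i₀‖ = c * x i₀ := (div_mul_cancel₀ _ (hx i₀).ne').symm
  refine le_of_mul_le_mul_right ?_ (hvi₀ ▸ mul_pos hc (hx i₀))
  calc ‖z‖ * ‖v i₀‖ ≤ ∑ j, A i₀ j * ‖v j‖ := norm_mul_norm_le_sum_mul_norm hA hAv i₀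
    _ ≤ ∑ j, A i₀ j * (c * x j) :=
        Finset.sum_le_sum fun j _ => mul_le_mul_of_nonneg_left (hvc j) (hA i₀ j)
    _ = c * (A *ᵥ x) i₀ := by
        simp only [mulVec, dotProduct, Finset.mul_sum]
        exact Finset.sum_congr rfl fun j _ => by ring
    _ ≤ c * (r * x i₀) := mul_le_mul_of_nonneg_left (h i₀) hc.le
    _ = r * ‖v i₀‖ := by rw [hvi₀]; ring

lemma specRad_eq_zero_of_isEmpty [IsEmpty (Fin n)] (A : Matrix (Fin n) (Fin n) ℝ) :
    specRad A = 0 :=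
  le_antisymm (specRad_le_of_mulVec_le (x := 0) isEmptyElim isEmptyElim le_rfl isEmptyElim)
    (specRad_nonneg A)

lemma norm_map_ofReal (A : Matrix (Fin n) (Fin n) ℝ) : ‖A.map Complex.ofReal‖ = ‖A‖ := by
  simp only [← coe_nnnorm, linfty_opNNNorm_def, map_apply, Complex.nnnorm_real]

lemma map_ofReal_pow (A : Matrix (Fin n) (Fin n) ℝ) (k : ℕ) :
    (A ^ k).map Complex.ofReal = A.map Complex.ofReal ^ k :=
  map_pow Complex.ofRealHom.mapMatrix A k

lemma le_rpow_inv_of_pow_le {r a : ℝ} (hr : 0 ≤ r) {k : ℕ} (hk : k ≠ 0) (h : r ^ k ≤ a) :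
    r ≤ a ^ (k : ℝ)⁻¹ :=
  (Real.le_rpow_inv_iff_of_pos hr ((pow_nonneg hr k).trans h) (by positivity)).2
    (by rwa [Real.rpow_natCast])

lemma pow_smul_le_pow_mulVec {A : Matrix (Fin n) (Fin n) ℝ} (hA : ∀ i j, 0 ≤ A i j)
    {x : Fin n → ℝ} {r : ℝ} (hr : 0 ≤ r) (h : r • x ≤ A *ᵥ x) (k : ℕ) :
    r ^ k • x ≤ (A ^ k) *ᵥ x := by
  induction k with
  | zero => simp
  | succ k ih =>
    calc r ^ (k + 1) • x = r ^ k • r • x := by rw [pow_succ, mul_smul]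
      _ ≤ r ^ k • (A *ᵥ x) := smul_le_smul_of_nonneg_left h (pow_nonneg hr k)
      _ = A *ᵥ (r ^ k • x) := by rw [mulVec_smul]
      _ ≤ A *ᵥ ((A ^ k) *ᵥ x) := fun i => dotProduct_le_dotProduct_of_nonneg_left ih (hA i)
      _ = (A ^ (k + 1)) *ᵥ x := by rw [mulVec_mulVec, ← pow_succ']

section Nonempty

variable [Nonempty (Fin n)]

lemma ofReal_specRad (A : Matrix (Fin n) (Fin n) ℝ) :
    ENNReal.ofReal (specRad A) = spectralRadius ℂ (A.map Complex.ofReal) := by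
  obtain ⟨z, hz, hzA⟩ := exists_norm_eq_specRad A
  refine le_antisymm ?_ (iSup₂_le fun w hw => ?_)
  · rw [← hzA, ofReal_norm]
    exact le_iSup₂ (f := fun w (_ : w ∈ spectrum ℂ (A.map Complex.ofReal)) => ‖w‖ₑ) z hz
  · rw [← enorm_eq_nnnorm, ← ofReal_norm]
    exact ENNReal.ofReal_le_ofReal (norm_le_specRad hw)

lemma tendsto_norm_pow_rpow_specRad (A : Matrix (Fin n) (Fin n) ℝ) :
    Tendsto (fun k : ℕ => ‖A.map Complex.ofReal ^ k‖ ^ (k : ℝ)⁻¹) atTop (𝓝 (specRad A)) := by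
  have h := spectrum.pow_norm_pow_one_div_tendsto_nhds_spectralRadius (A.map Complex.ofReal)
  rw [← ofReal_specRad] at h
  have := (ENNReal.tendsto_toReal ENNReal.ofReal_ne_top).comp h
  simpa [Function.comp_def, ENNReal.toReal_ofReal, Real.rpow_nonneg, specRad_nonneg] using this

lemma specRad_pow_le_norm_pow (A : Matrix (Fin n) (Fin n) ℝ) (k : ℕ) :
    specRad A ^ k ≤ ‖A.map Complex.ofReal ^ k‖ := by
  obtain ⟨z, hz, hzA⟩ := exists_norm_eq_specRad A
  rw [← hzA, ← norm_pow]
  exact spectrum.norm_le_norm_of_mem (spectrum.pow_mem_pow _ k hz)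

theorem le_specRad_of_le_mulVec {A : Matrix (Fin n) (Fin n) ℝ} (hA : ∀ i j, 0 ≤ A i j)
    {x : Fin n → ℝ} (hx : 0 ≤ x) (hx0 : x ≠ 0) {r : ℝ} (hr : 0 ≤ r) (h : r • x ≤ A *ᵥ x) :
    r ≤ specRad A := by
  refine ge_of_tendsto (tendsto_norm_pow_rpow_specRad A)
    ((eventually_ne_atTop 0).mono fun k hk => le_rpow_inv_of_pow_le hr hk ?_)
  have hxpos : 0 < ‖x‖ := norm_pos_iff.2 hx0
  have hpow : r ^ k * ‖x‖ ≤ ‖(A ^ k) *ᵥ x‖ := by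
    rw [← Real.norm_of_nonneg (pow_nonneg hr k), ← norm_smul]
    refine (pi_norm_le_iff_of_nonneg (norm_nonneg _)).2 fun i => ?_
    have hi := pow_smul_le_pow_mulVec hA hr h k i
    have h0 : 0 ≤ (r ^ k • x) i := smul_nonneg (pow_nonneg hr k) (hx i)
    rw [Real.norm_of_nonneg h0]
    exact (hi.trans (le_abs_self _)).trans (norm_le_pi_norm ((A ^ k) *ᵥ x) i)
  rw [← map_ofReal_pow, norm_map_ofReal]
  exact le_of_mul_le_mul_right ((hpow.trans (linfty_opNorm_mulVec _ _))) hxpos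

end Nonempty

theorem upperSemicontinuous_specRad :
    UpperSemicontinuous (specRad : Matrix (Fin n) (Fin n) ℝ → ℝ) := by
  intro M y hy
  rcases isEmpty_or_nonempty (Fin n) with hn | hn
  · exact Eventually.of_forall fun M' => by rwa [Subsingleton.elim M' M]
  obtain ⟨k, hk, hk0⟩ := (((tendsto_norm_pow_rpow_specRad M).eventually_lt_const hy).and
    (eventually_ne_atTop 0)).exists
  have hcont : Continuous fun M' : Matrix (Fin n) (Fin n) ℝ =>
      ‖M'.map Complex.ofReal ^ k‖ ^ (k : ℝ)⁻¹ :=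
    ((continuous_id.matrix_map Complex.continuous_ofReal).pow k).norm.rpow_const
      fun _ => Or.inr (by positivity)
  filter_upwards [hcont.continuousAt.eventually_lt continuousAt_const hk] with M' hM'
  exact (le_rpow_inv_of_pow_le (specRad_nonneg M') hk0 (specRad_pow_le_norm_pow M' k)).trans_lt hM'

end SpectralRadius

theorem UpperSemicontinuousAt.le_of_tendsto {α β γ : Type*} [TopologicalSpace α] [LinearOrder β]
    {f : α → β} {a : α} (hf : UpperSemicontinuousAt f a) {u : γ → α} {l : Filter γ} [l.NeBot]
    (hu : Tendsto u l (𝓝 a)) {c : β} (hc : ∀ᶠ m in l, c ≤ f (u m)) : c ≤ f a := by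
  by_contra! h
  obtain ⟨m, hm, hm'⟩ := ((hu.eventually (hf c h)).and hc).exists
  exact hm.not_ge hm'

theorem exists_specRad_mul_le {N M : ℕ} {S : Set (Matrix (Fin N) (Fin M) ℝ)}
    {T : Set (Matrix (Fin M) (Fin N) ℝ)} (hS : IsCompact S) (hT : IsCompact T) :
    ∃ C, ∀ A ∈ S, ∀ B ∈ T, specRad (A * B) ≤ C := by
  have husc : UpperSemicontinuous fun p : Matrix (Fin N) (Fin M) ℝ × Matrix (Fin M) (Fin N) ℝ =>
      specRad (p.1 * p.2) :=
    upperSemicontinuous_specRad.comp (continuous_fst.matrix_mul continuous_snd)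
  obtain ⟨C, hC⟩ := (husc.upperSemicontinuousOn _).bddAbove_of_isCompact (hS.prod hT)
  exact ⟨C, fun A hA B hB => hC ⟨(A, B), ⟨hA, hB⟩, rfl⟩⟩

section PerronFrobenius

variable {ι : Type*} [Fintype ι] {T : (ι → ℝ) → ι → ℝ}

lemma inv_sum_smul_mem_stdSimplex {y : ι → ℝ} (hy : 0 ≤ y) (hs : 0 < ∑ i, y i) :
    (∑ i, y i)⁻¹ • y ∈ stdSimplex ℝ ι :=
  ⟨fun i => smul_nonneg (inv_nonneg.2 hs.le) (hy i), by
    simp only [Pi.smul_apply, smul_eq_mul, ← Finset.mul_sum, inv_mul_cancel₀ hs.ne']⟩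

theorem exists_greatest_subeigenvalue [Nonempty ι] (hT : Continuous T)
    (hT0 : ∀ x ∈ stdSimplex ℝ ι, 0 ≤ T x) :
    ∃ (r : ℝ) (x : ι → ℝ), x ∈ stdSimplex ℝ ι ∧ r • x ≤ T x ∧
      ∀ (s : ℝ) y, y ∈ stdSimplex ℝ ι → s • y ≤ T y → s ≤ r := by
  set S := {p : ℝ × (ι → ℝ) | p.2 ∈ stdSimplex ℝ ι ∧ 0 ≤ p.1 ∧ p.1 • p.2 ≤ T p.2}
  obtain ⟨C, hC⟩ := (isCompact_stdSimplex ℝ ι).bddAbove_image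
    (continuous_finsetSum Finset.univ fun i _ => (continuous_apply i).comp hT).continuousOn
  have hbound : ∀ s y, y ∈ stdSimplex ℝ ι → s • y ≤ T y → s ≤ C := fun s y hy hsy =>
    calc s = ∑ i, s * y i := by rw [← Finset.mul_sum, hy.2, mul_one]
      _ ≤ ∑ i, T y i := Finset.sum_le_sum fun i _ => hsy i
      _ ≤ C := hC ⟨y, hy, rfl⟩
  have hS : IsCompact S := by
    refine (isCompact_Icc.prod (isCompact_stdSimplex ℝ ι)).of_isClosed_subset ?_
      fun p hp => ⟨⟨hp.2.1, hbound _ _ hp.1 hp.2.2⟩, hp.1⟩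
    exact ((isClosed_stdSimplex ℝ ι).preimage continuous_snd).inter
      ((isClosed_le continuous_const continuous_fst).inter
        (isClosed_le (continuous_fst.smul continuous_snd) (hT.comp continuous_snd)))
  obtain ⟨⟨x₀, hx₀⟩⟩ : Nonempty (stdSimplex ℝ ι) := inferInstance
  obtain ⟨⟨r, x⟩, ⟨hx, hr, hrx⟩, hmax⟩ := hS.exists_isMaxOn
    ⟨(0, x₀), hx₀, le_rfl, by simpa using hT0 x₀ hx₀⟩
    continuous_fst.continuousOn
  refine ⟨r, x, hx, hrx, fun s y hy hsy => ?_⟩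
  rcases lt_or_ge s 0 with hs | hs
  · exact hs.le.trans hr
  · exact hmax (a := (s, y)) ⟨hy, hs, hsy⟩

theorem exists_pos_eigenvector_of_strictMono [Nonempty ι] (hT : Continuous T)
    (hhom : ∀ c : ℝ, 0 ≤ c → ∀ x, T (c • x) = c • T x)
    (hmono : ∀ x y, 0 ≤ x → x < y → ∀ i, T x i < T y i) :
    ∃ r : ℝ, 0 < r ∧ ∃ x, (∀ i, 0 < x i) ∧ T x = r • x := by
  have hT0 : T 0 = 0 := by simpa using hhom 0 le_rfl 0
  have hpos : ∀ x ∈ stdSimplex ℝ ι, ∀ i, 0 < T x i := fun x hx i => by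
    have hx0 : 0 < x := lt_of_le_of_ne hx.1 fun h => by simpa [← h] using hx.2
    simpa [hT0] using hmono 0 x le_rfl hx0 i
  obtain ⟨r, x, hx, hrx, hmax⟩ :=
    exists_greatest_subeigenvalue hT fun x hx i => (hpos x hx i).le
  have hr : 0 ≤ r := hmax 0 x hx (by rw [zero_smul]; exact fun i => (hpos x hx i).le)
  have hTx : T x = r • x := by
    by_contra hne
    set y := T x
    -- strict monotonicity at `r • x < y` gives `r • y < T y`, so `r` is not maximal
    have hlt : ∀ i, r * y i < T y i := fun i => by
      simpa [hhom r hr] using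
        hmono (r • x) y (smul_nonneg hr hx.1) (lt_of_le_of_ne hrx (Ne.symm hne)) i
    have hev : ∀ᶠ s in 𝓝 r, ∀ i, s * y i < T y i := eventually_all.2 fun i =>
      ((continuous_mul_const (y i)).tendsto r).eventually_lt_const (hlt i)
    obtain ⟨s, hs, hrs⟩ := ((hev.filter_mono nhdsWithin_le_nhds).and
      (self_mem_nhdsWithin (s := Set.Ioi r))).exists
    have hsum : 0 < ∑ i, y i := Finset.sum_pos (fun i _ => hpos x hx i) Finset.univ_nonempty
    refine (not_le.2 hrs)
      (hmax s _ (inv_sum_smul_mem_stdSimplex (fun i => (hpos x hx i).le) hsum) ?_)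
    rw [hhom _ (inv_nonneg.2 hsum.le), smul_comm]
    exact smul_le_smul_of_nonneg_left (fun i => (hs i).le) (inv_nonneg.2 hsum.le)
  have hrx_pos : ∀ i, 0 < r * x i := fun i => by simpa [hTx] using hpos x hx i
  obtain ⟨i₀⟩ := ‹Nonempty ι›
  exact ⟨r, pos_of_mul_pos_left (hrx_pos i₀) (hx.1 i₀), x,
    fun i => pos_of_mul_pos_right (hrx_pos i) hr, hTx⟩

end PerronFrobenius

section SupportFunction

variable {ι : Type*} [Fintype ι] {K : Set (ι → ℝ)}

noncomputable def maxDot (K : Set (ι → ℝ)) (x : ι → ℝ) : ℝ := sSup ((· ⬝ᵥ x) '' K)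

noncomputable def minDot (K : Set (ι → ℝ)) (x : ι → ℝ) : ℝ := sInf ((· ⬝ᵥ x) '' K)

lemma continuous_maxDot (hK : IsCompact K) : Continuous (maxDot K) :=
  hK.continuous_sSup (f := fun x b => b ⬝ᵥ x) (continuous_snd.dotProduct continuous_fst)

lemma continuous_minDot (hK : IsCompact K) : Continuous (minDot K) :=
  hK.continuous_sInf (f := fun x b => b ⬝ᵥ x) (continuous_snd.dotProduct continuous_fst)

lemma exists_dotProduct_eq_maxDot (hK : IsCompact K) (hne : K.Nonempty) (x : ι → ℝ) :
    ∃ b ∈ K, b ⬝ᵥ x = maxDot K x :=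
  (hK.image (continuous_id.dotProduct continuous_const)).sSup_mem (hne.image _)

lemma exists_dotProduct_eq_minDot (hK : IsCompact K) (hne : K.Nonempty) (x : ι → ℝ) :
    ∃ b ∈ K, b ⬝ᵥ x = minDot K x :=
  (hK.image (continuous_id.dotProduct continuous_const)).sInf_mem (hne.image _)

lemma dotProduct_le_maxDot (hK : IsCompact K) {b : ι → ℝ} (hb : b ∈ K) (x : ι → ℝ) :
    b ⬝ᵥ x ≤ maxDot K x :=
  le_csSup (hK.image (continuous_id.dotProduct continuous_const)).bddAbove ⟨b, hb, rfl⟩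

lemma minDot_le_dotProduct (hK : IsCompact K) {b : ι → ℝ} (hb : b ∈ K) (x : ι → ℝ) :
    minDot K x ≤ b ⬝ᵥ x :=
  csInf_le (hK.image (continuous_id.dotProduct continuous_const)).bddBelow ⟨b, hb, rfl⟩

lemma maxDot_mono (hK : IsCompact K) (hne : K.Nonempty) (hK0 : ∀ b ∈ K, 0 ≤ b) :
    Monotone (maxDot K) := fun x y hxy => by
  obtain ⟨b, hb, hbx⟩ := exists_dotProduct_eq_maxDot hK hne x
  exact hbx ▸ (dotProduct_le_dotProduct_of_nonneg_left hxy (hK0 b hb)).trans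
    (dotProduct_le_maxDot hK hb y)

lemma minDot_mono (hK : IsCompact K) (hne : K.Nonempty) (hK0 : ∀ b ∈ K, 0 ≤ b) :
    Monotone (minDot K) := fun x y hxy => by
  obtain ⟨b, hb, hby⟩ := exists_dotProduct_eq_minDot hK hne y
  exact hby ▸ (minDot_le_dotProduct hK hb x).trans
    (dotProduct_le_dotProduct_of_nonneg_left hxy (hK0 b hb))

lemma image_dotProduct_smul (K : Set (ι → ℝ)) (c : ℝ) (x : ι → ℝ) :
    (· ⬝ᵥ c • x) '' K = c • (· ⬝ᵥ x) '' K := by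
  simp only [dotProduct_smul, ← Set.image_smul, Set.image_image, smul_eq_mul]

lemma maxDot_smul {c : ℝ} (hc : 0 ≤ c) (x : ι → ℝ) : maxDot K (c • x) = c * maxDot K x := by
  rw [maxDot, image_dotProduct_smul, Real.sSup_smul_of_nonneg hc, smul_eq_mul, maxDot]

lemma minDot_smul {c : ℝ} (hc : 0 ≤ c) (x : ι → ℝ) : minDot K (c • x) = c * minDot K x := by
  rw [minDot, image_dotProduct_smul, Real.sInf_smul_of_nonneg hc, smul_eq_mul, minDot]

end SupportFunction

section Game

variable {ι κ : Type*} [Fintype ι] [Fintype κ] {rowsA : ι → Set (κ → ℝ)}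
  {rowsB : κ → Set (ι → ℝ)} {ε : ℝ}

/-- Row by row, `minMaxOp rowsA rowsB ε x = min_{A ∈ 𝒜} max_{B ∈ ℬ} (A B + ε J) x`, with `J` the
all-ones matrix: for IRU-sets the optimisation decouples over rows. -/
noncomputable def minMaxOp (rowsA : ι → Set (κ → ℝ)) (rowsB : κ → Set (ι → ℝ)) (ε : ℝ)
    (x : ι → ℝ) : ι → ℝ :=
  fun i => minDot (rowsA i) (fun j => maxDot (rowsB j) x) + ε * ∑ k, x k

lemma continuous_minMaxOp (hAcomp : ∀ i, IsCompact (rowsA i)) (hBcomp : ∀ j, IsCompact (rowsB j)) :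
    Continuous (minMaxOp rowsA rowsB ε) :=
  continuous_pi fun i => ((continuous_minDot (hAcomp i)).comp
    (continuous_pi fun j => continuous_maxDot (hBcomp j))).add
    (continuous_const.mul (continuous_finsetSum _ fun k _ => continuous_apply k))

lemma minMaxOp_smul {c : ℝ} (hc : 0 ≤ c) (x : ι → ℝ) :
    minMaxOp rowsA rowsB ε (c • x) = c • minMaxOp rowsA rowsB ε x := by
  have hψ : (fun j => maxDot (rowsB j) (c • x)) = c • fun j => maxDot (rowsB j) x :=
    funext fun j => maxDot_smul hc x
  funext i
  simp only [minMaxOp, hψ, minDot_smul hc, Pi.smul_apply, smul_eq_mul, ← Finset.mul_sum]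
  ring

lemma minMaxOp_lt_minMaxOp (hAne : ∀ i, (rowsA i).Nonempty) (hAcomp : ∀ i, IsCompact (rowsA i))
    (hAnn : ∀ i, ∀ a ∈ rowsA i, 0 ≤ a) (hBne : ∀ j, (rowsB j).Nonempty)
    (hBcomp : ∀ j, IsCompact (rowsB j)) (hBnn : ∀ j, ∀ b ∈ rowsB j, 0 ≤ b) (hε : 0 < ε)
    {x y : ι → ℝ} (hxy : x < y) (i : ι) :
    minMaxOp rowsA rowsB ε x i < minMaxOp rowsA rowsB ε y i := by
  have hψ : (fun j => maxDot (rowsB j) x) ≤ fun j => maxDot (rowsB j) y := fun j =>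
    maxDot_mono (hBcomp j) (hBne j) (hBnn j) hxy.le
  obtain ⟨k, hk⟩ := (Pi.lt_def.1 hxy).2
  have hsum : ∑ k, x k < ∑ k, y k :=
    Finset.sum_lt_sum (fun k _ => hxy.le k) ⟨k, Finset.mem_univ k, hk⟩
  exact add_lt_add_of_le_of_lt (minDot_mono (hAcomp i) (hAne i) (hAnn i) hψ)
    (mul_lt_mul_of_pos_left hsum hε)

end Game

instance Matrix.firstCountableTopology {m n R : Type*} [Countable m] [Countable n]
    [TopologicalSpace R] [FirstCountableTopology R] : FirstCountableTopology (Matrix m n R) :=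
  inferInstanceAs (FirstCountableTopology (m → n → R))

lemma IRU_nonempty {N M : ℕ} {rows : Fin N → Set (Fin M → ℝ)} (h : ∀ i, (rows i).Nonempty) :
    (IRU rows).Nonempty :=
  ⟨fun i => (h i).some, fun i => (h i).some_mem⟩

lemma isCompact_IRU {N M : ℕ} {rows : Fin N → Set (Fin M → ℝ)} (h : ∀ i, IsCompact (rows i)) :
    IsCompact (IRU rows) := by
  have : IRU rows = Set.univ.pi rows := Set.ext fun _ => ⟨fun h i _ => h i, fun h i => h i trivial⟩
  exact this ▸ isCompact_univ_pi h

lemma mul_apply_nonneg {l m n : Type*} [Fintype m] {A : Matrix l m ℝ} {B : Matrix m n ℝ}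
    (hA : ∀ i j, 0 ≤ A i j) (hB : ∀ i j, 0 ≤ B i j) (i : l) (k : n) : 0 ≤ (A * B) i k :=
  Finset.sum_nonneg fun j _ => mul_nonneg (hA i j) (hB j k)

section Saddle

variable {N M : ℕ} {rowsA : Fin N → Set (Fin M → ℝ)} {rowsB : Fin M → Set (Fin N → ℝ)}
  (hAne : ∀ i, (rowsA i).Nonempty) (hAcomp : ∀ i, IsCompact (rowsA i))
  (hAnn : ∀ i, ∀ a ∈ rowsA i, ∀ j, 0 ≤ a j)
  (hBne : ∀ i, (rowsB i).Nonempty) (hBcomp : ∀ i, IsCompact (rowsB i))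
  (hBnn : ∀ i, ∀ b ∈ rowsB i, ∀ j, 0 ≤ b j)
include hAne hAcomp hAnn hBne hBcomp hBnn

theorem exists_approx_saddlePoint {ε : ℝ} (hε : 0 < ε) :
    ∃ r, ∃ As ∈ IRU rowsA, ∃ Bs ∈ IRU rowsB, (∀ B ∈ IRU rowsB, specRad (As * B) ≤ r) ∧
      ∀ A ∈ IRU rowsA, r ≤ specRad (A * Bs + ε • Matrix.of fun _ _ => 1) := by
  rcases isEmpty_or_nonempty (Fin N) with hN | hN
  · obtain ⟨A₀, hA₀⟩ := IRU_nonempty hAne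
    obtain ⟨B₀, hB₀⟩ := IRU_nonempty hBne
    exact ⟨0, A₀, hA₀, B₀, hB₀, fun B _ => (specRad_eq_zero_of_isEmpty _).le,
      fun A _ => specRad_nonneg _⟩
  obtain ⟨r, hr, x, hx, hTx⟩ :=
    exists_pos_eigenvector_of_strictMono (continuous_minMaxOp hAcomp hBcomp)
      (fun c hc x => minMaxOp_smul hc x)
      (fun x y _ hxy => minMaxOp_lt_minMaxOp hAne hAcomp hAnn hBne hBcomp hBnn hε hxy)
  set ψ := fun j => maxDot (rowsB j) x
  have hTx' : ∀ i, minDot (rowsA i) ψ + ε * ∑ k, x k = r * x i := fun i => congrFun hTx i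
  choose b hb hbx using fun j => exists_dotProduct_eq_maxDot (hBcomp j) (hBne j) x
  choose a ha haψ using fun i => exists_dotProduct_eq_minDot (hAcomp i) (hAne i) ψ
  refine ⟨r, of a, ha, of b, hb, fun B hB => ?_, fun A hA => ?_⟩
  · refine specRad_le_of_mulVec_le (mul_apply_nonneg (fun i => hAnn i _ (ha i))
      fun j => hBnn j _ (hB j)) hx hr.le fun i => ?_
    calc ((of a * B) *ᵥ x) i = a i ⬝ᵥ (B *ᵥ x) := by rw [← mulVec_mulVec]; rfl
      _ ≤ a i ⬝ᵥ ψ := dotProduct_le_dotProduct_of_nonneg_left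
          (fun j => dotProduct_le_maxDot (hBcomp j) (hB j) x) (hAnn i _ (ha i))
      _ = minDot (rowsA i) ψ := haψ i
      _ ≤ r * x i := hTx' i ▸ le_add_of_nonneg_right
          (mul_nonneg hε.le (Finset.sum_nonneg fun k _ => (hx k).le))
  · have hbx' : of b *ᵥ x = ψ := funext hbx
    have hnn : ∀ i k, 0 ≤ (A * of b + ε • of fun _ _ => 1 : Matrix (Fin N) (Fin N) ℝ) i k :=
      fun i k => add_nonneg
        (mul_apply_nonneg (fun i => hAnn i _ (hA i)) (fun j => hBnn j _ (hb j)) i k)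
        (by simpa using hε.le)
    refine le_specRad_of_le_mulVec hnn (fun i => (hx i).le)
      (fun h => (hx (Classical.arbitrary _)).ne' (congrFun h _)) hr.le fun i => ?_
    calc (r • x) i = minDot (rowsA i) ψ + ε * ∑ k, x k := (hTx' i).symm
      _ ≤ A i ⬝ᵥ ψ + ε * ∑ k, x k := by
          gcongr; exact minDot_le_dotProduct (hAcomp i) (hA i) ψ
      _ = ((A * of b + ε • of fun _ _ => 1) *ᵥ x) i := by
          rw [add_mulVec, ← mulVec_mulVec, hbx']
          simp [mulVec, dotProduct, Finset.mul_sum]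

theorem exists_forall_sInf_sSup_le_specRad :
    ∃ Bh ∈ IRU rowsB, ∀ A ∈ IRU rowsA,
      sInf ((fun A => sSup ((fun B => specRad (A * B)) '' IRU rowsB)) '' IRU rowsA) ≤
        specRad (A * Bh) := by
  set v := sInf ((fun A => sSup ((fun B => specRad (A * B)) '' IRU rowsB)) '' IRU rowsA)
  have happrox : ∀ m : ℕ, ∃ Bs ∈ IRU rowsB, ∀ A ∈ IRU rowsA,
      v ≤ specRad (A * Bs + (1 / ((m : ℝ) + 1)) • of fun _ _ => 1) := fun m => by
    obtain ⟨r, As, hAs, Bs, hBs, hup, hlo⟩ :=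
      exists_approx_saddlePoint hAne hAcomp hAnn hBne hBcomp hBnn Nat.one_div_pos_of_nat
    have hv : v ≤ r :=
      calc v ≤ sSup ((fun B => specRad (As * B)) '' IRU rowsB) := by
            refine csInf_le ⟨0, ?_⟩ ⟨As, hAs, rfl⟩
            rintro _ ⟨A, -, rfl⟩
            exact Real.sSup_nonneg (by rintro _ ⟨B, -, rfl⟩; exact specRad_nonneg _)
        _ ≤ r := csSup_le ((IRU_nonempty hBne).image _) (by rintro _ ⟨B, hB, rfl⟩; exact hup B hB)
    exact ⟨Bs, hBs, fun A hA => hv.trans (hlo A hA)⟩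
  choose Bs hBs hv using happrox
  obtain ⟨Bh, hBh, φ, hφ, hlim⟩ := (isCompact_IRU hBcomp).tendsto_subseq hBs
  refine ⟨Bh, hBh, fun A hA => ?_⟩
  have hε : Tendsto (fun m => 1 / ((φ m : ℝ) + 1)) atTop (𝓝 0) :=
    tendsto_one_div_add_atTop_nhds_zero_nat.comp hφ.tendsto_atTop
  have hconv : Tendsto (fun m => A * Bs (φ m) + (1 / ((φ m : ℝ) + 1)) • of fun _ _ => 1) atTop
      (𝓝 (A * Bh)) := by
    simpa using (((continuous_const.matrix_mul continuous_id).tendsto Bh).comp hlim).add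
      (hε.smul_const (of fun _ _ => (1 : ℝ)))
  exact UpperSemicontinuousAt.le_of_tendsto (upperSemicontinuous_specRad _) hconv
    (Eventually.of_forall fun m => hv (φ m) A hA)

end Saddle

section Minimax

variable {α β : Type*} {f : α → β → ℝ} {s : Set α} {t : Set β} {c C : ℝ}

theorem sSup_sInf_le_sInf_sSup (hs : s.Nonempty) (ht : t.Nonempty)
    (hlo : ∀ a ∈ s, ∀ b ∈ t, c ≤ f a b) (hhi : ∀ a ∈ s, ∀ b ∈ t, f a b ≤ C) :
    sSup ((fun b => sInf ((fun a => f a b) '' s)) '' t) ≤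
      sInf ((fun a => sSup ((fun b => f a b) '' t)) '' s) := by
  refine le_csInf (hs.image _) ?_
  rintro _ ⟨a, ha, rfl⟩
  refine csSup_le (ht.image _) ?_
  rintro _ ⟨b, hb, rfl⟩
  calc sInf ((fun a => f a b) '' s) ≤ f a b :=
        csInf_le ⟨c, by rintro _ ⟨a', ha', rfl⟩; exact hlo a' ha' b hb⟩ ⟨a, ha, rfl⟩
    _ ≤ sSup ((fun b => f a b) '' t) :=
        le_csSup ⟨C, by rintro _ ⟨b', hb', rfl⟩; exact hhi a ha b' hb'⟩ ⟨b, hb, rfl⟩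

theorem sInf_sSup_le_sSup_sInf (hs : s.Nonempty) (hlo : ∀ a ∈ s, ∀ b ∈ t, c ≤ f a b)
    (hhi : ∀ a ∈ s, ∀ b ∈ t, f a b ≤ C) {b₀ : β} (hb₀ : b₀ ∈ t)
    (h : ∀ a ∈ s, sInf ((fun a => sSup ((fun b => f a b) '' t)) '' s) ≤ f a b₀) :
    sInf ((fun a => sSup ((fun b => f a b) '' t)) '' s) ≤
      sSup ((fun b => sInf ((fun a => f a b) '' s)) '' t) := by
  have hbdd : BddAbove ((fun b => sInf ((fun a => f a b) '' s)) '' t) := by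
    obtain ⟨a₀, ha₀⟩ := hs
    refine ⟨C, ?_⟩
    rintro _ ⟨b, hb, rfl⟩
    calc sInf ((fun a => f a b) '' s) ≤ f a₀ b :=
          csInf_le ⟨c, by rintro _ ⟨a, ha, rfl⟩; exact hlo a ha b hb⟩ ⟨a₀, ha₀, rfl⟩
      _ ≤ C := hhi a₀ ha₀ b hb
  calc sInf ((fun a => sSup ((fun b => f a b) '' t)) '' s) ≤ sInf ((fun a => f a b₀) '' s) :=
        le_csInf (hs.image _) (by rintro _ ⟨a, ha, rfl⟩; exact h a ha)
    _ ≤ _ := le_csSup hbdd ⟨b₀, hb₀, rfl⟩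

end Minimax

theorem stmt9 {N M : ℕ}
    (rowsA : Fin N → Set (Fin M → ℝ)) (rowsB : Fin M → Set (Fin N → ℝ))
    (hAne : ∀ i, (rowsA i).Nonempty) (hAcomp : ∀ i, IsCompact (rowsA i))
    (hAnn : ∀ i, ∀ a ∈ rowsA i, ∀ j, 0 ≤ a j)
    (hBne : ∀ i, (rowsB i).Nonempty) (hBcomp : ∀ i, IsCompact (rowsB i))
    (hBnn : ∀ i, ∀ b ∈ rowsB i, ∀ j, 0 ≤ b j) :
    sInf ((fun A => sSup ((fun B => specRad (A * B)) '' IRU rowsB)) '' IRU rowsA) =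
      sSup ((fun B => sInf ((fun A => specRad (A * B)) '' IRU rowsA)) '' IRU rowsB) := by
  obtain ⟨C, hC⟩ := exists_specRad_mul_le (isCompact_IRU hAcomp) (isCompact_IRU hBcomp)
  have h0 : ∀ A ∈ IRU rowsA, ∀ B ∈ IRU rowsB, 0 ≤ specRad (A * B) :=
    fun _ _ _ _ => specRad_nonneg _
  obtain ⟨Bh, hBh, hBh_le⟩ :=
    exists_forall_sInf_sSup_le_specRad hAne hAcomp hAnn hBne hBcomp hBnn
  exact le_antisymm (sInf_sSup_le_sSup_sInf (IRU_nonempty hAne) h0 hC hBh hBh_le)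
    (sSup_sInf_le_sInf_sSup (IRU_nonempty hAne) (IRU_nonempty hBne) h0 hC)
end

section
/- For a compact IRU-set 𝒜 of strictly positive N×N matrices and α > 0: max_{A∈𝒜} ρ(A) ≤ α if and only if there exists a strictly positive vector v with A·v ≤ α·v componentwise for all A ∈ 𝒜. -/
open Matrix

/-!
A strictly positive `v` with `A v ≤ α v` bounds every eigenvalue of a nonnegative `A` by `α`
(Collatz–Wielandt), which gives one direction. For the other, let `T v i = max_{a ∈ rows i} a ⬝ v`
and minimize the ratio `max_i (T v)_i / v_i` over a compact set of positive vectors stable under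
normalized `T`. Since `T` is homogeneous and strictly monotone, a minimizer is an eigenvector,
`T v = r v`. Picking in each row a maximizer at `v` gives `A ∈ 𝒜` with `A v = r v`, so
`r = ρ(A) ≤ α`, and then `B v ≤ T v = r v ≤ α v` for every `B ∈ 𝒜`.
-/

open Finset

section Spectrum

variable {ι : Type*} [Fintype ι]

theorem Matrix.mem_spectrum_iff_exists_mulVec_eq_smul [DecidableEq ι] {K : Type*} [Field K]
    (A : Matrix ι ι K) (μ : K) : μ ∈ spectrum K A ↔ ∃ x, x ≠ 0 ∧ A *ᵥ x = μ • x := by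
  simp only [← Matrix.spectrum_toLin', ← Module.End.hasEigenvalue_iff_mem_spectrum,
    Module.End.hasEigenvalue_iff, Submodule.ne_bot_iff, Module.End.mem_eigenspace_iff,
    Matrix.toLin'_apply]
  exact ⟨fun ⟨x, hx, hx0⟩ => ⟨x, hx0, hx⟩, fun ⟨x, hx0, hx⟩ => ⟨x, hx, hx0⟩⟩

theorem le_of_smul_le_mulVec_of_mulVec_le {A : Matrix ι ι ℝ} (hA : ∀ i j, 0 ≤ A i j)
    {u v : ι → ℝ} (hu : ∀ i, 0 ≤ u i) (hu0 : u ≠ 0) (hv : ∀ i, 0 < v i) {s β : ℝ}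
    (hs : ∀ i, s * u i ≤ (A *ᵥ u) i) (hβ : ∀ i, (A *ᵥ v) i ≤ β * v i) : s ≤ β := by
  obtain ⟨j, hj⟩ := Function.ne_iff.1 hu0
  -- compare `u` with the smallest multiple `c • v` dominating it; they touch at `i`
  obtain ⟨i, -, hi⟩ := exists_max_image univ (fun j => u j / v j) ⟨j, mem_univ j⟩
  set c := u i / v i
  have hle : ∀ j, u j ≤ c * v j := fun j => (div_le_iff₀ (hv j)).1 (hi j (mem_univ j))
  have hui : u i = c * v i := (div_mul_cancel₀ _ (hv i).ne').symm
  have hc : 0 < c :=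
    (div_pos ((hu j).lt_of_ne (Ne.symm hj)) (hv j)).trans_le (hi j (mem_univ j))
  have hui_pos : 0 < u i := hui ▸ mul_pos hc (hv i)
  have : s * u i ≤ β * u i :=
    calc s * u i ≤ (A *ᵥ u) i := hs i
      _ ≤ (A *ᵥ (c • v)) i := by
        simp only [mulVec, dotProduct]
        exact sum_le_sum fun j _ => mul_le_mul_of_nonneg_left (hle j) (hA i j)
      _ = c * (A *ᵥ v) i := by rw [mulVec_smul, Pi.smul_apply, smul_eq_mul]
      _ ≤ c * (β * v i) := mul_le_mul_of_nonneg_left (hβ i) hc.le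
      _ = β * u i := by rw [hui]; ring
  exact le_of_mul_le_mul_right this hui_pos

theorem norm_le_of_mem_spectrum_of_mulVec_le [DecidableEq ι] {A : Matrix ι ι ℝ}
    (hA : ∀ i j, 0 ≤ A i j) {v : ι → ℝ} (hv : ∀ i, 0 < v i) {β : ℝ}
    (hβ : ∀ i, (A *ᵥ v) i ≤ β * v i) {μ : ℂ} (hμ : μ ∈ spectrum ℂ (A.map Complex.ofReal)) :
    ‖μ‖ ≤ β := by
  obtain ⟨x, hx0, hx⟩ := (mem_spectrum_iff_exists_mulVec_eq_smul _ μ).1 hμ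
  refine le_of_smul_le_mulVec_of_mulVec_le hA (u := fun j => ‖x j‖) (fun j => norm_nonneg _)
    (fun h => hx0 (funext fun j => norm_eq_zero.1 (congrFun h j))) hv (fun i => ?_) hβ
  calc ‖μ‖ * ‖x i‖ = ‖∑ j, (A i j : ℂ) * x j‖ := by
        rw [← norm_mul, ← smul_eq_mul, ← Pi.smul_apply, ← hx]; rfl
    _ ≤ ∑ j, A i j * ‖x j‖ := by
        refine (norm_sum_le _ _).trans_eq (sum_congr rfl fun j _ => ?_)
        rw [norm_mul, Complex.norm_real, Real.norm_of_nonneg (hA i j)]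
    _ = (A *ᵥ fun j => ‖x j‖) i := rfl

end Spectrum

section SpectralRadius

variable {N : ℕ} {A : Matrix (Fin N) (Fin N) ℝ} {v : Fin N → ℝ}

theorem specRad_le_of_mulVec_le_s14 (hA : ∀ i j, 0 ≤ A i j) (hv : ∀ i, 0 < v i) {β : ℝ}
    (hβ0 : 0 ≤ β) (hβ : ∀ i, (A *ᵥ v) i ≤ β * v i) : specRad A ≤ β :=
  Real.sSup_le (by rintro _ ⟨μ, hμ, rfl⟩; exact norm_le_of_mem_spectrum_of_mulVec_le hA hv hβ hμ)
    hβ0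

theorem specRad_eq_of_mulVec_eq [Nonempty (Fin N)] (hA : ∀ i j, 0 ≤ A i j)
    (hv : ∀ i, 0 < v i) {r : ℝ} (hr : A *ᵥ v = r • v) : specRad A = r := by
  have hbound : ∀ i, (A *ᵥ v) i ≤ r * v i := fun i => by rw [hr]; rfl
  have hmem : (r : ℂ) ∈ spectrum ℂ (A.map Complex.ofReal) := by
    refine (mem_spectrum_iff_exists_mulVec_eq_smul _ _).2 ⟨fun j => (v j : ℂ), fun h => ?_, ?_⟩
    · obtain i := Classical.arbitrary (Fin N)
      exact (hv i).ne' (Complex.ofReal_injective (congrFun h i))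
    · ext i
      simpa [mulVec, dotProduct] using congrArg Complex.ofReal (congrFun hr i)
  have hr_norm : ‖(r : ℂ)‖ = r := by
    have := norm_le_of_mem_spectrum_of_mulVec_le hA hv hbound hmem
    rw [Complex.norm_real, Real.norm_eq_abs] at this ⊢
    exact abs_eq_self.2 ((abs_nonneg r).trans this)
  refine IsGreatest.csSup_eq ⟨⟨_, hmem, hr_norm⟩, ?_⟩
  rintro _ ⟨μ, hμ, rfl⟩
  exact norm_le_of_mem_spectrum_of_mulVec_le hA hv hbound hμ

end SpectralRadius

section RowMax

variable {ι κ : Type*} [Fintype κ] {rows : ι → Set (κ → ℝ)}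

noncomputable def rowMax (rows : ι → Set (κ → ℝ)) (v : κ → ℝ) (i : ι) : ℝ :=
  sSup ((· ⬝ᵥ v) '' rows i)

theorem dotProduct_le_rowMax (hcomp : ∀ i, IsCompact (rows i)) {a : κ → ℝ} {i : ι}
    (ha : a ∈ rows i) (v : κ → ℝ) : a ⬝ᵥ v ≤ rowMax rows v i :=
  le_csSup ((hcomp i).image (continuous_id.dotProduct continuous_const)).bddAbove
    (Set.mem_image_of_mem _ ha)

theorem exists_mem_dotProduct_eq_rowMax (hne : ∀ i, (rows i).Nonempty)
    (hcomp : ∀ i, IsCompact (rows i)) (v : κ → ℝ) (i : ι) :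
    ∃ a ∈ rows i, a ⬝ᵥ v = rowMax rows v i :=
  let ⟨a, ha, h⟩ := (hcomp i).exists_sSup_image_eq (hne i)
    (continuous_id.dotProduct (continuous_const (y := v))).continuousOn
  ⟨a, ha, h.symm⟩

theorem continuous_rowMax (hcomp : ∀ i, IsCompact (rows i)) : Continuous (rowMax rows) :=
  continuous_pi fun i => (hcomp i).continuous_sSup (f := fun v a => a ⬝ᵥ v) (by fun_prop)

theorem rowMax_smul {c : ℝ} (hc : 0 ≤ c) (v : κ → ℝ) :
    rowMax rows (c • v) = c • rowMax rows v := by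
  ext i
  rw [Pi.smul_apply, smul_eq_mul, rowMax, rowMax, ← smul_eq_mul, ← Real.sSup_smul_of_nonneg hc,
    ← Set.image_smul, Set.image_image]
  simp only [dotProduct_smul, smul_eq_mul]

theorem rowMax_pos (hne : ∀ i, (rows i).Nonempty) (hcomp : ∀ i, IsCompact (rows i))
    (hpos : ∀ i, ∀ a ∈ rows i, ∀ j, 0 < a j) {v : κ → ℝ} (hv : 0 < v) (i : ι) :
    0 < rowMax rows v i := by
  obtain ⟨a, ha⟩ := hne i
  obtain ⟨j, hj⟩ := (Pi.lt_def.1 hv).2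
  refine lt_of_lt_of_le ?_ (dotProduct_le_rowMax hcomp ha v)
  exact Finset.sum_pos' (fun k _ => mul_nonneg (hpos i a ha k).le (hv.le k))
    ⟨j, Finset.mem_univ j, mul_pos (hpos i a ha j) hj⟩

theorem rowMax_lt_rowMax (hne : ∀ i, (rows i).Nonempty) (hcomp : ∀ i, IsCompact (rows i))
    (hpos : ∀ i, ∀ a ∈ rows i, ∀ j, 0 < a j) {u w : κ → ℝ} (huw : u < w) (i : ι) :
    rowMax rows u i < rowMax rows w i := by
  obtain ⟨a, ha, hau⟩ := exists_mem_dotProduct_eq_rowMax hne hcomp u i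
  obtain ⟨j, hj⟩ := (Pi.lt_def.1 huw).2
  rw [← hau]
  refine lt_of_lt_of_le ?_ (dotProduct_le_rowMax hcomp ha w)
  exact Finset.sum_lt_sum (fun k _ => mul_le_mul_of_nonneg_left (huw.le k) (hpos i a ha k).le)
    ⟨j, Finset.mem_univ j, mul_lt_mul_of_pos_left hj (hpos i a ha j)⟩

end RowMax

section CollatzWielandt

variable {ι : Type*} [Fintype ι] [Nonempty ι] {rows : ι → Set (ι → ℝ)}

noncomputable def collatzWielandt (rows : ι → Set (ι → ℝ)) (v : ι → ℝ) : ℝ :=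
  univ.sup' univ_nonempty fun i => rowMax rows v i / v i

theorem rowMax_le_collatzWielandt_mul {v : ι → ℝ} (hv : ∀ i, 0 < v i) (i : ι) :
    rowMax rows v i ≤ collatzWielandt rows v * v i :=
  (div_le_iff₀ (hv i)).1 (le_sup' (fun i => rowMax rows v i / v i) (mem_univ i))

theorem collatzWielandt_lt {w : ι → ℝ} (hw : ∀ i, 0 < w i) {r : ℝ}
    (h : ∀ i, rowMax rows w i < r * w i) : collatzWielandt rows w < r :=
  (sup'_lt_iff _).2 fun i _ => (div_lt_iff₀ (hw i)).2 (h i)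

theorem collatzWielandt_smul {c : ℝ} (hc : 0 < c) (v : ι → ℝ) :
    collatzWielandt rows (c • v) = collatzWielandt rows v := by
  simp only [collatzWielandt, rowMax_smul hc.le, Pi.smul_apply, smul_eq_mul,
    mul_div_mul_left _ _ hc.ne']

theorem collatzWielandt_rowMax_lt (hne : ∀ i, (rows i).Nonempty)
    (hcomp : ∀ i, IsCompact (rows i)) (hpos : ∀ i, ∀ a ∈ rows i, ∀ j, 0 < a j) {v : ι → ℝ}
    (hv : ∀ i, 0 < v i) (hv_ne : rowMax rows v ≠ collatzWielandt rows v • v) :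
    collatzWielandt rows (rowMax rows v) < collatzWielandt rows v := by
  set r := collatzWielandt rows v
  have hv' : 0 < v := Pi.lt_def.2 ⟨fun i => (hv i).le, Classical.arbitrary ι, hv _⟩
  have hle : rowMax rows v ≤ r • v := rowMax_le_collatzWielandt_mul hv
  have hrow_pos := rowMax_pos hne hcomp hpos hv'
  have hr : 0 ≤ r := by
    obtain i := Classical.arbitrary ι
    exact (pos_of_mul_pos_left ((hrow_pos i).trans_le (hle i)) (hv i).le).le
  refine collatzWielandt_lt hrow_pos fun i => ?_
  calc rowMax rows (rowMax rows v) i < rowMax rows (r • v) i :=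
        rowMax_lt_rowMax hne hcomp hpos (lt_of_le_of_ne hle hv_ne) i
    _ = r * rowMax rows v i := by rw [rowMax_smul hr]; rfl

theorem exists_pos_rowMax_eq_smul (hne : ∀ i, (rows i).Nonempty)
    (hcomp : ∀ i, IsCompact (rows i)) (hpos : ∀ i, ∀ a ∈ rows i, ∀ j, 0 < a j) :
    ∃ v : ι → ℝ, (∀ i, 0 < v i) ∧ ∃ r : ℝ, rowMax rows v = r • v := by
  have hrow_pos : ∀ v ∈ stdSimplex ℝ ι, ∀ i, 0 < rowMax rows v i := fun v hv =>
    rowMax_pos hne hcomp hpos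
      (lt_of_le_of_ne hv.1 (by rintro rfl; simp [stdSimplex] at hv))
  have hsum_pos : ∀ v ∈ stdSimplex ℝ ι, 0 < ∑ j, rowMax rows v j := fun v hv =>
    sum_pos (fun j _ => hrow_pos v hv j) univ_nonempty
  set φ : (ι → ℝ) → ι → ℝ := fun v => (∑ j, rowMax rows v j)⁻¹ • rowMax rows v
  have hφ_pos : ∀ v ∈ stdSimplex ℝ ι, ∀ i, 0 < φ v i := fun v hv i =>
    mul_pos (inv_pos.2 (hsum_pos v hv)) (hrow_pos v hv i)
  have hφ_mem : ∀ v ∈ stdSimplex ℝ ι, φ v ∈ stdSimplex ℝ ι := fun v hv =>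
    ⟨fun i => (hφ_pos v hv i).le, by
      simp only [φ, Pi.smul_apply, smul_eq_mul, ← mul_sum, inv_mul_cancel₀ (hsum_pos v hv).ne']⟩
  have hφ_cont : ContinuousOn φ (stdSimplex ℝ ι) :=
    ((continuous_finsetSum _ fun j _ => (continuous_apply j).comp
      (continuous_rowMax hcomp)).continuousOn.inv₀ fun v hv => (hsum_pos v hv).ne').smul
      (continuous_rowMax hcomp).continuousOn
  have hcw_cont : ContinuousOn (collatzWielandt rows) (φ '' stdSimplex ℝ ι) := by
    refine ContinuousOn.finset_sup'_apply _ fun i _ => ?_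
    refine ((continuous_apply i).comp (continuous_rowMax hcomp)).continuousOn.div
      (continuous_apply i).continuousOn ?_
    rintro _ ⟨v, hv, rfl⟩
    exact (hφ_pos v hv i).ne'
  obtain ⟨_, ⟨v, hv, rfl⟩, hmin⟩ := ((isCompact_stdSimplex ℝ ι).image_of_continuousOn
    hφ_cont).exists_isMinOn ((isPathConnected_stdSimplex ι).nonempty.image φ) hcw_cont
  refine ⟨φ v, hφ_pos v hv, collatzWielandt rows (φ v), by_contra fun h => ?_⟩
  have hlt := collatzWielandt_rowMax_lt hne hcomp hpos (hφ_pos v hv) h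
  rw [← collatzWielandt_smul (inv_pos.2 (hsum_pos _ (hφ_mem v hv)))] at hlt
  exact hlt.not_ge (hmin (Set.mem_image_of_mem φ (hφ_mem v hv)))

end CollatzWielandt

theorem stmt14 {N : ℕ} (rows : Fin N → Set (Fin N → ℝ))
    (hne : ∀ i, (rows i).Nonempty) (hcomp : ∀ i, IsCompact (rows i))
    (hpos : ∀ i, ∀ a ∈ rows i, ∀ j, 0 < a j) (α : ℝ) (hα : 0 < α) :
    (∀ A ∈ IRU rows, specRad A ≤ α) ↔
      ∃ v : Fin N → ℝ, (∀ i, 0 < v i) ∧ ∀ A ∈ IRU rows, ∀ i, A.mulVec v i ≤ α * v i := by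
  have hA_nonneg : ∀ A ∈ IRU rows, ∀ i j, 0 ≤ A i j := fun A hA i j => (hpos i _ (hA i) j).le
  refine ⟨fun hspec => ?_, fun ⟨v, hv, hAv⟩ A hA =>
    specRad_le_of_mulVec_le_s14 (hA_nonneg A hA) hv hα.le (hAv A hA)⟩
  rcases isEmpty_or_nonempty (Fin N) with hN | hN
  · exact ⟨0, isEmptyElim, fun _ _ => isEmptyElim⟩
  obtain ⟨v, hv, r, hr⟩ := exists_pos_rowMax_eq_smul hne hcomp hpos
  choose a ha hav using exists_mem_dotProduct_eq_rowMax hne hcomp v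
  have hrα : r ≤ α := by
    have hAv : Matrix.of a *ᵥ v = r • v := (funext hav).trans hr
    rw [← specRad_eq_of_mulVec_eq (hA_nonneg _ ha) hv hAv]
    exact hspec _ ha
  refine ⟨v, hv, fun B hB i => ?_⟩
  calc (B *ᵥ v) i ≤ rowMax rows v i := dotProduct_le_rowMax hcomp (hB i) v
    _ = r * v i := congrFun hr i
    _ ≤ α * v i := mul_le_mul_of_nonneg_right hrα (hv i).le
end
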